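/- Let T = (n; δ, σ) with σ ≠ 0 and δ ≥ 2|σ| be positive definite, and let R ∈ ℝ^{n×n} be upper triangular with positive diagonal entries such that RᵀR = T. Then for every i = 2,…,n one has r_{i−1,i−1} > |r_{i−1,i}| and r_{i,i} > |r_{i−1,i}|; that is, each off-diagonal entry of the Cholesky factor is strictly dominated in absolute value by the two diagonal entries adjacent to it. -/

import Mathlib

open Real Filter

noncomputable def tridiag (n : ℕ) (d s : ℝ) : Matrix (Fin n) (Fin n) ℝ :=
  Matrix.of fun i j =>
    if (i : ℕ) = (j : ℕ) then d
    else if (i : ℕ) + 1 = (j : ℕ) ∨ (j : ℕ) + 1 = (i : ℕ) then s else 0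

noncomputable def lam (n : ℕ) (δ σ : ℝ) (h : ℕ) : ℝ :=
  δ + 2 * σ * Real.cos (h * Real.pi / (n + 1))

noncomputable def kap (n h : ℕ) : ℝ :=
  Real.sqrt (1 / (n : ℝ) + 2 / ((n : ℝ) - 1) * Real.cos (h * Real.pi / (n + 1)) ^ 2)

noncomputable def evec (n h : ℕ) : Fin n → ℝ :=
  fun k => Real.sqrt (2 / (n + 1)) * Real.sin (h * (k.1 + 1) * Real.pi / (n + 1))

noncomputable def frobNorm {n : ℕ} (A : Matrix (Fin n) (Fin n) ℝ) : ℝ :=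
  Real.sqrt (∑ i, ∑ j, A i j ^ 2)

/-!
Since `T` is tridiagonal, its Cholesky factor `R` is upper bidiagonal, and comparing entries of
`RᵀR = T` gives `r_{i,i} r_{i,i+1} = σ` and `r_{i,i+1}² + r_{i+1,i+1}² = δ`. By induction
`r_{i,i}² > |σ|`: it holds for `r_{1,1}² = δ ≥ 2|σ|`, and if `r_{i,i}² > |σ|` then
`r_{i,i+1}² = σ² / r_{i,i}² < |σ|`, whence `r_{i+1,i+1}² = δ - r_{i,i+1}² > δ - |σ| ≥ |σ|`.
So both diagonal entries adjacent to `r_{i,i+1}` have square exceeding `|σ| > r_{i,i+1}²`.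
-/

open Matrix

namespace Matrix.IsUpperTriangular

variable {α : Type*} [Semiring α]

theorem eq_zero_of_transpose_mul_self_eq_zero [NoZeroDivisors α] {n : ℕ}
    {R : Matrix (Fin n) (Fin n) α} (hR : R.IsUpperTriangular) (hdiag : ∀ i, R i i ≠ 0)
    (hT : ∀ i j : Fin n, (i : ℕ) + 1 < j → (Rᵀ * R) i j = 0) :
    ∀ i j : Fin n, (i : ℕ) + 1 < j → R i j = 0 := by
  intro i
  induction i using WellFoundedLT.induction with
  | _ i ih =>
  intro j hij
  have hsum : (Rᵀ * R) i j = R i i * R i j := by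
    rw [mul_apply]
    refine Finset.sum_eq_single i (fun k _ hki => ?_) (by simp)
    rcases lt_or_gt_of_ne hki with hk | hk
    · by_cases hki1 : (k : ℕ) + 1 < i
      · simp [ih k hk i hki1]
      · simp [ih k hk j (by omega)]
    · simp [hR hk]
  exact (mul_eq_zero.mp (hsum ▸ hT i j hij)).resolve_left (hdiag i)

variable {m : ℕ} {R : Matrix (Fin (m + 1)) (Fin (m + 1)) α} (hR : R.IsUpperTriangular)
include hR

theorem transpose_mul_self_apply_zero_zero : (Rᵀ * R) 0 0 = R 0 0 ^ 2 := by
  rw [mul_apply, Finset.sum_eq_single 0 (fun k _ hk => by simp [hR (Fin.pos_of_ne_zero hk)])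
    (by simp)]
  simp [sq]

variable (hbidiag : ∀ i j : Fin (m + 1), (i : ℕ) + 1 < j → R i j = 0)
include hbidiag

theorem transpose_mul_self_apply_castSucc_succ (i : Fin m) :
    (Rᵀ * R) i.castSucc i.succ = R i.castSucc i.castSucc * R i.castSucc i.succ := by
  rw [mul_apply]
  refine Finset.sum_eq_single i.castSucc (fun k _ hk => ?_) (by simp)
  rcases lt_or_gt_of_ne hk with hk | hk
  · simp [hbidiag k i.succ (by simp [Fin.lt_def] at hk ⊢; omega)]
  · rw [transpose_apply, hR (i := k) (j := i.castSucc) hk, zero_mul]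

theorem transpose_mul_self_apply_succ_succ (i : Fin m) :
    (Rᵀ * R) i.succ i.succ = R i.castSucc i.succ ^ 2 + R i.succ i.succ ^ 2 := by
  rw [mul_apply, Fintype.sum_eq_add i.castSucc i.succ (Fin.castSucc_lt_succ).ne]
  · simp [sq]
  · rintro k ⟨hk₁, hk₂⟩
    rcases lt_or_gt_of_ne hk₂ with hk | hk
    · have hk₁ : (k : ℕ) ≠ i := fun h => hk₁ (Fin.ext h)
      simp [hbidiag k i.succ (by simp [Fin.lt_def] at hk ⊢; omega)]
    · rw [transpose_apply, hR (i := k) (j := i.succ) hk, zero_mul]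

end Matrix.IsUpperTriangular

theorem sq_lt_abs_of_mul_eq {d e σ : ℝ} (hσ : σ ≠ 0) (hd : |σ| < d ^ 2) (hde : d * e = σ) :
    e ^ 2 < |σ| := by
  have hσpos : 0 < |σ| := abs_pos.mpr hσ
  have hprod : e ^ 2 * d ^ 2 = |σ| * |σ| := by rw [← sq, sq_abs, ← hde]; ring
  nlinarith

theorem tridiag_apply_self (n : ℕ) (d s : ℝ) (i : Fin n) : tridiag n d s i i = d := by
  simp [tridiag]

theorem tridiag_apply_castSucc_succ (m : ℕ) (d s : ℝ) (i : Fin m) :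
    tridiag (m + 1) d s i.castSucc i.succ = s := by
  simp [tridiag]

theorem tridiag_apply_of_add_one_lt {n : ℕ} (d s : ℝ) {i j : Fin n} (hij : (i : ℕ) + 1 < j) :
    tridiag n d s i j = 0 := by
  simp only [tridiag, of_apply]
  rw [if_neg (by omega), if_neg (by omega)]

section CholeskyTridiag

variable {m : ℕ} {δ σ : ℝ} {R : Matrix (Fin (m + 1)) (Fin (m + 1)) ℝ}
  (hR : R.IsUpperTriangular) (hdiag : ∀ i, 0 < R i i) (hfact : Rᵀ * R = tridiag (m + 1) δ σ)
include hR hdiag hfact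

theorem cholesky_tridiag_apply_eq_zero_of_add_one_lt :
    ∀ i j : Fin (m + 1), (i : ℕ) + 1 < j → R i j = 0 :=
  hR.eq_zero_of_transpose_mul_self_eq_zero (fun i => (hdiag i).ne')
    (fun _ _ hij => hfact ▸ tridiag_apply_of_add_one_lt δ σ hij)

theorem abs_lt_sq_cholesky_tridiag_diag (hσ : σ ≠ 0) (hδ : 2 * |σ| ≤ δ) (i : Fin (m + 1)) :
    |σ| < R i i ^ 2 := by
  have hbidiag := cholesky_tridiag_apply_eq_zero_of_add_one_lt hR hdiag hfact
  have hσpos : 0 < |σ| := abs_pos.mpr hσ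
  induction i using Fin.induction with
  | zero =>
    have h00 := hR.transpose_mul_self_apply_zero_zero
    rw [hfact, tridiag_apply_self] at h00
    linarith
  | succ i ih =>
    have hoff := hR.transpose_mul_self_apply_castSucc_succ hbidiag i
    have hdiag' := hR.transpose_mul_self_apply_succ_succ hbidiag i
    rw [hfact, tridiag_apply_castSucc_succ] at hoff
    rw [hfact, tridiag_apply_self] at hdiag'
    linarith [sq_lt_abs_of_mul_eq hσ ih hoff.symm]

theorem abs_cholesky_tridiag_superdiag_lt (hσ : σ ≠ 0) (hδ : 2 * |σ| ≤ δ) (i : Fin m) :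
    |R i.castSucc i.succ| < R i.castSucc i.castSucc ∧
      |R i.castSucc i.succ| < R i.succ i.succ := by
  have hsq := abs_lt_sq_cholesky_tridiag_diag hR hdiag hfact hσ hδ
  have hoff := hR.transpose_mul_self_apply_castSucc_succ
    (cholesky_tridiag_apply_eq_zero_of_add_one_lt hR hdiag hfact) i
  rw [hfact, tridiag_apply_castSucc_succ] at hoff
  have he := sq_lt_abs_of_mul_eq hσ (hsq i.castSucc) hoff.symm
  exact ⟨abs_lt_of_sq_lt_sq (by linarith [hsq i.castSucc]) (hdiag _).le,
    abs_lt_of_sq_lt_sq (by linarith [hsq i.succ]) (hdiag _).le⟩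

end CholeskyTridiag

/-- if `δ ≥ 2|σ| > 0` (so `T = (n; δ, σ)` is positive definite) and `R` is its
Cholesky factor, each off-diagonal entry of `R` is strictly dominated in absolute value by the two
adjacent diagonal entries. -/
theorem stmt_14 (n : ℕ) (δ σ : ℝ) (hσ : σ ≠ 0) (hδ : 2 * |σ| ≤ δ)
    (R : Matrix (Fin n) (Fin n) ℝ)
    (hupper : ∀ i j : Fin n, (j : ℕ) < (i : ℕ) → R i j = 0)
    (hdiagpos : ∀ i : Fin n, 0 < R i i)
    (hfact : R.transpose * R = tridiag n δ σ) :
    ∀ (j : ℕ) (hj : j + 1 < n),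
      |R ⟨j, by omega⟩ ⟨j + 1, hj⟩| < R ⟨j, by omega⟩ ⟨j, by omega⟩ ∧
      |R ⟨j, by omega⟩ ⟨j + 1, hj⟩| < R ⟨j + 1, hj⟩ ⟨j + 1, hj⟩ := by
  intro j hj
  obtain ⟨m, rfl⟩ : ∃ m, n = m + 1 := ⟨n - 1, by omega⟩
  exact abs_cholesky_tridiag_superdiag_lt (fun i j h => hupper i j h) hdiagpos hfact hσ hδ
    ⟨j, by omega⟩
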